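/- arXiv:1904.06450 — 2 statements merged into one kernel-verified Lean document; each statement's English description precedes it below -/
import Mathlib

section
/- Fix p ∈ [0,1]^J and J orthogonal projections π_j^0 : ℝ^n → (V_j^0)^⊥, where V_j^0 is an n_j'-dimensional subspace of ℝ^n; set n_j = n − n_j' and, for r ∈ {1,…,n}, 𝒥_r = {j ∈ {1,…,J} : n_j ≥ r}. Then there exist ν > 0 and C_0 > 0 such that BL(π, p, R) ≤ C_0 · R^{Σ_{r=1}^n max(1 − Σ_{j ∈ 𝒥_r} p_j, 0)} holds for all R ≥ 1 and all J-tuples π = (π_1,…,π_J) of orthogonal projections π_j : ℝ^n → V_j^⊥, where V_j is an n_j'-dimensional subspace of ℝ^n within distance ν of V_j^0. -/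
open MeasureTheory Module RealInnerProductSpace
open scoped ENNReal
noncomputable section

abbrev Euc (n : ℕ) := EuclideanSpace ℝ (Fin n)

def latticeCube {m : ℕ} (v : Fin m → ℤ) (A : ℝ) : Set (Euc m) :=
  {x | ∀ i, (v i : ℝ) ≤ x i ∧ x i < v i + A}

def LatticeConst {m : ℕ} (f : Euc m → ℝ) : Prop :=
  ∀ v : Fin m → ℤ, ∀ x ∈ latticeCube v 1, ∀ y ∈ latticeCube v 1, f x = f y

def cubeR (n : ℕ) (R : ℝ) : Set (Euc n) := {x | ∀ i, |x i| ≤ R}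

def BLconst {n J : ℕ} {nd : Fin J → ℕ} (π : ∀ j, Euc n →ₗ[ℝ] Euc (nd j))
    (p : Fin J → ℝ) (R : ℝ) : ℝ :=
  sSup {r : ℝ | ∃ f : ∀ j, Euc (nd j) → ℝ,
    (∀ j, LatticeConst (f j)) ∧ (∀ j, Integrable (f j)) ∧
    (∀ j x, 0 ≤ f j x) ∧ (∀ j, f j ≠ 0) ∧
    r = (∫ x in cubeR n R, ∏ j, f j (π j x) ^ p j) / ∏ j, (∫ x, f j x) ^ p j}

def supExp {n J : ℕ} {nd : Fin J → ℕ} (π : ∀ j, Euc n →ₗ[ℝ] Euc (nd j))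
    (p : Fin J → ℝ) (R : ℝ) : ℝ :=
  ⨆ V : Submodule ℝ (Euc n),
    R ^ ((finrank ℝ V : ℝ) - ∑ j, p j * (finrank ℝ (V.map (π j)) : ℝ))

def oprojL {n : ℕ} (U : Submodule ℝ (Euc n)) : Euc n →L[ℝ] Euc n :=
  U.subtypeL.comp (Submodule.orthogonalProjectionOnto U)

def oproj {n : ℕ} (U : Submodule ℝ (Euc n)) : Euc n →ₗ[ℝ] Euc n :=
  (oprojL U).toLinearMap

def projDist {n : ℕ} (U W : Submodule ℝ (Euc n)) : ℝ := ‖oprojL U - oprojL W‖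

def deltaNbhd {n : ℕ} (δ : ℝ) (a : Euc n) (W : Submodule ℝ (Euc n)) : Set (Euc n) :=
  {x | Metric.infDist x ((a + ·) '' (W : Set (Euc n))) ≤ δ}

namespace BLaux


def toEuc {m : ℕ} (x : Fin m → ℝ) : Euc m := WithLp.toLp 2 x

@[simp] lemma toEuc_apply {m : ℕ} (x : Fin m → ℝ) (i : Fin m) : toEuc x i = x i := rfl

lemma latticeCube_eq_pi {m : ℕ} (v : Fin m → ℤ) :
    latticeCube v 1 = (WithLp.ofLp : Euc m → (Fin m → ℝ)) ⁻¹'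
      Set.univ.pi (fun i => Set.Ico (v i : ℝ) (v i + 1)) := by
  ext x
  exact ⟨fun h i _ => h i, fun h i => h i trivial⟩

lemma measurableSet_latticeCube {m : ℕ} (v : Fin m → ℤ) :
    MeasurableSet (latticeCube v 1) := by
  rw [latticeCube_eq_pi]
  exact (MeasurableSet.univ_pi (fun i => measurableSet_Ico)).preimage
    (PiLp.volume_preserving_ofLp (Fin m)).measurable

lemma volume_latticeCube {m : ℕ} (v : Fin m → ℤ) :
    volume (latticeCube v 1) = 1 := by
  rw [latticeCube_eq_pi]
  have : volume (Set.univ.pi (fun i => Set.Ico (v i : ℝ) (v i + 1)) : Set (Fin m → ℝ)) = 1 := by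
    rw [volume_pi_pi]
    simp [Real.volume_Ico]
  rw [(PiLp.volume_preserving_ofLp (Fin m)).measure_preimage
      (MeasurableSet.univ_pi (fun i => measurableSet_Ico)).nullMeasurableSet]
  exact this

lemma mem_latticeCube_floor {m : ℕ} (x : Euc m) :
    x ∈ latticeCube (fun i => ⌊x i⌋) 1 :=
  fun i => ⟨Int.floor_le _, by push_cast; exact Int.lt_floor_add_one _⟩

lemma intPt_mem_latticeCube {m : ℕ} (v : Fin m → ℤ) :
    toEuc (fun i => (v i : ℝ)) ∈ latticeCube v 1 :=
  fun i => ⟨le_refl _, by simp⟩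

lemma latConst_eq_floor {m : ℕ} {f : Euc m → ℝ} (hf : LatticeConst f) (x : Euc m) :
    f x = f (toEuc (fun i => ((⌊x i⌋ : ℤ) : ℝ))) :=
  hf (fun i => ⌊x i⌋) x (mem_latticeCube_floor x) _ (intPt_mem_latticeCube _)

lemma latConst_measurable {m : ℕ} {f : Euc m → ℝ} (hf : LatticeConst f) :
    Measurable f := by
  have : f = (fun w : Fin m → ℤ => f (toEuc (fun i => (w i : ℝ)))) ∘
      (fun x : Euc m => fun i => ⌊x i⌋) := by
    funext x
    exact latConst_eq_floor hf x
  rw [this]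
  exact (measurable_of_countable _).comp
    (measurable_pi_lambda _ (fun i => Measurable.floor
      ((measurable_pi_apply i).comp (PiLp.volume_preserving_ofLp (Fin m)).measurable)))

lemma latConst_le_integral {m : ℕ} {f : Euc m → ℝ} (hf : LatticeConst f)
    (hi : Integrable f) (h0 : ∀ y, 0 ≤ f y) (x : Euc m) : f x ≤ ∫ y, f y := by
  have h1 : ∫ y in latticeCube (fun i => ⌊x i⌋) 1, f y = f x := by
    rw [setIntegral_congr_fun (measurableSet_latticeCube _)
      (fun y hy => hf _ y hy x (mem_latticeCube_floor x)), setIntegral_const,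
      measureReal_def, volume_latticeCube]
    simp
  calc f x = ∫ y in latticeCube (fun i => ⌊x i⌋) 1, f y := h1.symm
    _ ≤ ∫ y, f y := setIntegral_le_integral hi (Filter.Eventually.of_forall h0)

lemma latConst_integral_pos {m : ℕ} {f : Euc m → ℝ} (hf : LatticeConst f)
    (hi : Integrable f) (h0 : ∀ y, 0 ≤ f y) (hne : f ≠ 0) : 0 < ∫ y, f y := by
  obtain ⟨x, hx⟩ : ∃ x, f x ≠ 0 := by
    by_contra h
    push_neg at h
    exact hne (funext h)
  have hx' : 0 < f x := lt_of_le_of_ne (h0 x) (Ne.symm hx)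
  have h1 : ∫ y in latticeCube (fun i => ⌊x i⌋) 1, f y = f x := by
    rw [setIntegral_congr_fun (measurableSet_latticeCube _)
      (fun y hy => hf _ y hy x (mem_latticeCube_floor x)), setIntegral_const,
      measureReal_def, volume_latticeCube]
    simp
  calc (0:ℝ) < f x := hx'
    _ = _ := h1.symm
    _ ≤ ∫ y, f y := setIntegral_le_integral hi (Filter.Eventually.of_forall h0)



lemma lowerset_mem_iff {J : ℕ} (s : Finset (Fin J))
    (hs : ∀ ⦃i i' : Fin J⦄, i' ≤ i → i ∈ s → i' ∈ s) (i : Fin J) :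
    i ∈ s ↔ (i : ℕ) < s.card := by
  constructor
  · intro hi
    have h1 : Finset.Iic i ⊆ s := fun x hx => hs (Finset.mem_Iic.mp hx) hi
    have h2 := Finset.card_le_card h1
    rw [Fin.card_Iic] at h2
    omega
  · intro hi
    by_contra hins
    have h1 : s ⊆ Finset.Iio i := by
      intro x hx
      rw [Finset.mem_Iio]
      by_contra hxi
      exact hins (hs (le_of_not_gt hxi) hx)
    have h2 := Finset.card_le_card h1
    rw [Fin.card_Iio] at h2
    omega

lemma min_add_min (a b : ℝ) (hb : 0 ≤ b) :
    min a 1 + min b (max (1 - a) 0) = min (a + b) 1 := by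
  rcases le_total 1 a with h | h
  · rw [min_eq_right h, max_eq_right (by linarith : (1:ℝ) - a ≤ 0),
      min_eq_right hb, min_eq_right (by linarith)]
    ring
  · rw [min_eq_left h, max_eq_left (by linarith : (0:ℝ) ≤ 1 - a)]
    rcases le_total b (1 - a) with h2 | h2
    · rw [min_eq_left h2, min_eq_left (by linarith)]
    · rw [min_eq_right h2, min_eq_right (by linarith)]
      ring

lemma partial_sum_min {J : ℕ} (q : Fin J → ℝ) (hq : ∀ i, 0 ≤ q i)
    (u : Fin J → ℝ)
    (hu : ∀ i : Fin J, u i = min (q i)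
      (max (1 - ∑ i' ∈ Finset.univ.filter (fun i' : Fin J => (i':ℕ) < (i:ℕ)), q i') 0)) :
    ∀ k : ℕ, ∑ i ∈ Finset.univ.filter (fun i : Fin J => (i:ℕ) < k), u i
      = min (∑ i ∈ Finset.univ.filter (fun i : Fin J => (i:ℕ) < k), q i) 1 := by
  intro k
  induction k with
  | zero => simp
  | succ k ih =>
    by_cases hk : k < J
    · have hnotmem : (⟨k, hk⟩ : Fin J) ∉ Finset.univ.filter (fun i : Fin J => (i:ℕ) < k) := by
        simp
      have hsplit : Finset.univ.filter (fun i : Fin J => (i:ℕ) < k + 1)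
          = insert (⟨k, hk⟩ : Fin J) (Finset.univ.filter (fun i : Fin J => (i:ℕ) < k)) := by
        ext i
        simp only [Finset.mem_filter, Finset.mem_univ, true_and, Finset.mem_insert, Fin.ext_iff]
        omega
      rw [hsplit, Finset.sum_insert hnotmem, Finset.sum_insert hnotmem, ih, hu]
      simp only [Fin.val_mk]
      rw [add_comm (min (q ⟨k, hk⟩) _)]
      rw [min_add_min _ _ (hq _), add_comm (q ⟨k, hk⟩)]
    · have hsame : Finset.univ.filter (fun i : Fin J => (i:ℕ) < k + 1)
          = Finset.univ.filter (fun i : Fin J => (i:ℕ) < k) := by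
        ext i
        have := i.isLt
        simp only [Finset.mem_filter, Finset.mem_univ, true_and]
        omega
      rw [hsame, ih]

lemma exists_good_t {J n : ℕ} (nd : Fin J → ℕ) (hnd : ∀ j, nd j ≤ n)
    (p : Fin J → ℝ) (hp0 : ∀ j, 0 ≤ p j) :
    ∃ t : Fin J → ℝ, (∀ j, 0 ≤ t j) ∧ (∀ j, t j ≤ p j) ∧ (∑ j, t j) ≤ 1 ∧
      (n : ℝ) - ∑ j, t j * (nd j : ℝ) ≤
        ∑ r ∈ Finset.Icc 1 n,
          max (1 - ∑ j ∈ Finset.univ.filter (fun j => r ≤ nd j), p j) 0 := by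
  classical
  set σ : Equiv.Perm (Fin J) := Tuple.sort (fun j => OrderDual.toDual (nd j)) with hσ
  have hanti : ∀ ⦃i i' : Fin J⦄, i ≤ i' → nd (σ i') ≤ nd (σ i) := by
    intro i i' h
    exact Tuple.monotone_sort (fun j => OrderDual.toDual (nd j)) h
  set q : Fin J → ℝ := fun i => p (σ i) with hq
  have hq0 : ∀ i, 0 ≤ q i := fun i => hp0 _
  set u : Fin J → ℝ := fun i => min (q i)
      (max (1 - ∑ i' ∈ Finset.univ.filter (fun i' : Fin J => (i':ℕ) < (i:ℕ)), q i') 0) with hu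
  have hU := partial_sum_min q hq0 u (fun i => rfl)
  refine ⟨fun j => u (σ.symm j), ?_, ?_, ?_, ?_⟩
  · intro j
    exact le_min (hq0 _) (le_max_right _ _)
  · intro j
    calc u (σ.symm j) ≤ q (σ.symm j) := min_le_left _ _
      _ = p j := by rw [hq]; simp
  · have h1 : ∑ j, u (σ.symm j) = ∑ i, u i := Equiv.sum_comp σ.symm u
    have h2 : (Finset.univ.filter (fun i : Fin J => (i:ℕ) < J)) = Finset.univ := by
      ext i; simp [i.isLt]
    rw [h1, ← h2, hU J]
    exact min_le_right _ _
  · -- main estimate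
    have key : ∀ r : ℕ, ∑ j ∈ Finset.univ.filter (fun j => r ≤ nd j), u (σ.symm j)
        = min (∑ j ∈ Finset.univ.filter (fun j => r ≤ nd j), p j) 1 := by
      intro r
      set Jr : Finset (Fin J) := Finset.univ.filter (fun j => r ≤ nd j) with hJr
      set Jr' : Finset (Fin J) := Finset.univ.filter (fun i => r ≤ nd (σ i)) with hJr'
      have hmap : Jr' = Jr.map σ.symm.toEmbedding := by
        ext i
        simp only [hJr, hJr', Finset.mem_map, Finset.mem_filter, Finset.mem_univ, true_and,
          Equiv.coe_toEmbedding]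
        constructor
        · intro hi
          exact ⟨σ i, hi, σ.symm_apply_apply i⟩
        · rintro ⟨j, hj, rfl⟩
          simpa using hj
      have hlow : ∀ ⦃i i' : Fin J⦄, i' ≤ i → i ∈ Jr' → i' ∈ Jr' := by
        intro i i' h hi
        simp only [hJr', Finset.mem_filter, Finset.mem_univ, true_and] at hi ⊢
        exact le_trans hi (hanti h)
      have hmem := lowerset_mem_iff Jr' hlow
      have hJr'' : Jr' = Finset.univ.filter (fun i : Fin J => (i:ℕ) < Jr'.card) := by
        ext i
        simp only [Finset.mem_filter, Finset.mem_univ, true_and]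
        exact hmem i
      have e1 : ∑ j ∈ Jr, u (σ.symm j) = ∑ i ∈ Jr', u i := by
        rw [hmap, Finset.sum_map]
        rfl
      have e2 : ∑ j ∈ Jr, p j = ∑ i ∈ Jr', q i := by
        rw [hmap, Finset.sum_map]
        refine Finset.sum_congr rfl fun j _ => ?_
        simp [hq]
      rw [e1, e2, hJr'', hU Jr'.card]
    -- double counting
    have hcount : ∀ j, ((Finset.Icc 1 n).filter (fun r => r ≤ nd j)).card = nd j := by
      intro j
      have : (Finset.Icc 1 n).filter (fun r => r ≤ nd j) = Finset.Icc 1 (nd j) := by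
        ext r
        simp only [Finset.mem_filter, Finset.mem_Icc]
        have := hnd j
        omega
      rw [this, Nat.card_Icc]
      omega
    have hswap : ∑ j, u (σ.symm j) * (nd j : ℝ)
        = ∑ r ∈ Finset.Icc 1 n, ∑ j ∈ Finset.univ.filter (fun j => r ≤ nd j), u (σ.symm j) := by
      calc ∑ j, u (σ.symm j) * (nd j : ℝ)
          = ∑ j : Fin J, ∑ r ∈ Finset.Icc 1 n, if r ≤ nd j then u (σ.symm j) else 0 := by
            refine Finset.sum_congr rfl fun j _ => ?_
            rw [← Finset.sum_filter, Finset.sum_const, hcount j, nsmul_eq_mul, mul_comm]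
        _ = ∑ r ∈ Finset.Icc 1 n, ∑ j : Fin J, if r ≤ nd j then u (σ.symm j) else 0 :=
            Finset.sum_comm
        _ = _ := by
            refine Finset.sum_congr rfl fun r _ => ?_
            rw [← Finset.sum_filter]
    have hn : (n : ℝ) = ∑ _r ∈ Finset.Icc 1 n, (1 : ℝ) := by
      rw [Finset.sum_const, Nat.card_Icc, nsmul_eq_mul, mul_one]
      norm_num
    rw [hswap, hn, ← Finset.sum_sub_distrib]
    refine Finset.sum_le_sum fun r _ => ?_
    rw [key r]
    rcases le_total (∑ j ∈ Finset.univ.filter (fun j => r ≤ nd j), p j) 1 with h | h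
    · rw [min_eq_left h, max_eq_left (by linarith)]
    · rw [min_eq_right h]
      simp


lemma coord_abs_le_norm {ι : Type*} [Fintype ι] (y : EuclideanSpace ℝ ι) (a : ι) :
    |y a| ≤ ‖y‖ := by
  rw [EuclideanSpace.norm_eq]
  have h : |y a| ^ 2 ≤ ∑ i, ‖y i‖ ^ 2 := by
    have := Finset.single_le_sum (f := fun i => ‖y i‖ ^ 2)
      (fun i _ => by positivity) (Finset.mem_univ a)
    simpa [Real.norm_eq_abs] using this
  calc |y a| = Real.sqrt (|y a| ^ 2) := (Real.sqrt_sq (abs_nonneg _)).symm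
    _ ≤ _ := Real.sqrt_le_sqrt h

lemma fiber_bound {n d m : ℕ} (hdm : d + m = n) (W : Submodule ℝ (Euc n))
    (e : ↥W ≃ₗᵢ[ℝ] Euc d) (f : Euc d → ℝ) (hf : Measurable f)
    {R : ℝ} (hR : 0 ≤ R) :
    ∫⁻ x in cubeR n R, ENNReal.ofReal (f (e (Submodule.orthogonalProjectionOnto W x))) ≤
      (ENNReal.ofReal (2 * (((n : ℝ) + 1) * R))) ^ m * ∫⁻ y, ENNReal.ofReal (f y) := by
  classical
  set Rc : ℝ := ((n : ℝ) + 1) * R with hRc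
  have hRc0 : 0 ≤ Rc := by positivity
  -- orthonormal basis adapted to W
  set bW : OrthonormalBasis (Fin d) ℝ ↥W := (EuclideanSpace.basisFun (Fin d) ℝ).map e.symm
    with hbW
  set v : Fin d ⊕ Fin m → Euc n := Sum.elim (fun i => (bW i : Euc n)) (fun _ => 0) with hv
  have honW : Orthonormal ℝ (fun i : Fin d => (bW i : Euc n)) :=
    bW.orthonormal.comp_linearIsometry W.subtypeₗᵢ
  have hres : Orthonormal ℝ ((Set.range (Sum.inl : Fin d → Fin d ⊕ Fin m)).restrict v) := by
    set g : ↥(Set.range (Sum.inl : Fin d → Fin d ⊕ Fin m)) ≃ Fin d :=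
      (Equiv.ofInjective _ Sum.inl_injective).symm with hg
    have : (Set.range (Sum.inl : Fin d → Fin d ⊕ Fin m)).restrict v
        = (fun i : Fin d => (bW i : Euc n)) ∘ g := by
      funext z
      have hz : Sum.inl (g z) = (z : Fin d ⊕ Fin m) := by
        have := (Equiv.ofInjective _ (Sum.inl_injective (α := Fin d) (β := Fin m))).apply_symm_apply z
        exact congrArg Subtype.val this
      simp only [Set.restrict_apply, Function.comp_apply, ← hz, hv]
      show Sum.elim (fun i => (bW i : Euc n)) (fun _ => 0) (z : Fin d ⊕ Fin m) = _
      rw [← hz]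
      rfl
    rw [this]
    exact honW.comp _ g.injective
  have hcard : finrank ℝ (Euc n) = Fintype.card (Fin d ⊕ Fin m) := by
    simp [finrank_euclideanSpace_fin, hdm]
  obtain ⟨B, hB⟩ := hres.exists_orthonormalBasis_extension_of_card_eq hcard
  have hBl : ∀ i : Fin d, B (Sum.inl i) = (bW i : Euc n) :=
    fun i => hB (Sum.inl i) ⟨i, rfl⟩
  -- coordinates of the projection
  have hcoord : ∀ (x : Euc n) (i : Fin d),
      (e (Submodule.orthogonalProjectionOnto W x)) i = B.repr x (Sum.inl i) := by
    intro x i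
    rw [B.repr_apply_apply, hBl]
    have hsplit : (x : Euc n) = ↑(Submodule.orthogonalProjectionOnto W x) + (x - ↑(Submodule.orthogonalProjectionOnto W x)) :=
      by abel
    have hzero : (inner ℝ ((bW i : Euc n)) (x - ((Submodule.orthogonalProjectionOnto W x : ↥W) : Euc n)) : ℝ)
        = 0 :=
      (Submodule.mem_orthogonal W _).mp (W.sub_starProjection_mem_orthogonal x) _ (bW i).2
    calc (e (Submodule.orthogonalProjectionOnto W x)) i
        = (inner ℝ (EuclideanSpace.single i (1:ℝ)) (e (Submodule.orthogonalProjectionOnto W x)) : ℝ) := by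
          rw [EuclideanSpace.inner_single_left]; simp
      _ = (inner ℝ (e (bW i)) (e (Submodule.orthogonalProjectionOnto W x)) : ℝ) := by
          rw [hbW]
          simp only [OrthonormalBasis.map_apply]
          rw [e.apply_symm_apply, EuclideanSpace.basisFun_apply]
      _ = (inner ℝ (bW i) (Submodule.orthogonalProjectionOnto W x) : ℝ) := e.inner_map_map _ _
      _ = (inner ℝ ((bW i : Euc n)) (((Submodule.orthogonalProjectionOnto W x : ↥W)) : Euc n) : ℝ) := rfl
      _ = (inner ℝ ((bW i : Euc n)) x : ℝ) := by
          conv_rhs => rw [hsplit]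
          rw [inner_add_right, hzero, add_zero]
  -- step 1: enlarge cube to ball
  set S1 : Set (Euc n) := {x | ‖x‖ ≤ Rc} with hS1
  have hsub : cubeR n R ⊆ S1 := by
    intro x hx
    have h1 : ∑ i, ‖x i‖ ^ 2 ≤ (n : ℝ) * R ^ 2 := by
      calc ∑ i, ‖x i‖ ^ 2 ≤ ∑ _i : Fin n, R ^ 2 := by
            refine Finset.sum_le_sum fun i _ => ?_
            rw [Real.norm_eq_abs]
            exact pow_le_pow_left₀ (abs_nonneg _) (hx i) 2
        _ = (n : ℝ) * R ^ 2 := by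
            rw [Finset.sum_const, Finset.card_univ, Fintype.card_fin, nsmul_eq_mul]
    have h2 : (n : ℝ) * R ^ 2 ≤ Rc ^ 2 := by
      rw [hRc]
      have hn : (0:ℝ) ≤ (n:ℝ) := Nat.cast_nonneg n
      nlinarith [sq_nonneg R]
    show ‖x‖ ≤ Rc
    rw [EuclideanSpace.norm_eq]
    calc Real.sqrt (∑ i, ‖x i‖ ^ 2) ≤ Real.sqrt (Rc ^ 2) :=
          Real.sqrt_le_sqrt (le_trans h1 h2)
      _ = Rc := Real.sqrt_sq hRc0
  -- step 2: transfer along B.repr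
  set G3 : ((Fin d ⊕ Fin m) → ℝ) → ℝ≥0∞ :=
    fun z => ENNReal.ofReal (f (toEuc (fun i => z (Sum.inl i)))) with hG3
  have hG3meas : Measurable G3 := by
    apply ENNReal.measurable_ofReal.comp
    exact hf.comp ((PiLp.volume_preserving_toLp (Fin d)).measurable.comp
      (measurable_pi_lambda _ (fun i => measurable_pi_apply (Sum.inl i))))
  set G2 : EuclideanSpace ℝ (Fin d ⊕ Fin m) → ℝ≥0∞ := fun y => G3 y with hG2
  have hG2meas : Measurable G2 :=
    hG3meas.comp (PiLp.volume_preserving_ofLp (Fin d ⊕ Fin m)).measurable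
  have harg : ∀ x : Euc n, ENNReal.ofReal (f (e (Submodule.orthogonalProjectionOnto W x))) = G2 (B.repr x) := by
    intro x
    have : e (Submodule.orthogonalProjectionOnto W x) = toEuc (fun i => B.repr x (Sum.inl i)) :=
      PiLp.ext (fun i => hcoord x i)
    rw [hG2, hG3, this]
  set S2 : Set (EuclideanSpace ℝ (Fin d ⊕ Fin m)) := {y | ‖y‖ ≤ Rc} with hS2
  have hS1pre : S1 = ⇑B.repr ⁻¹' S2 := by
    ext x
    simp only [hS1, hS2, Set.mem_setOf_eq, Set.mem_preimage, LinearIsometryEquiv.norm_map]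
  set T : Set (EuclideanSpace ℝ (Fin d ⊕ Fin m)) := {y | ∀ k : Fin m, |y (Sum.inr k)| ≤ Rc}
    with hT
  have hS2T : S2 ⊆ T := by
    intro y hy k
    exact le_trans (coord_abs_le_norm y (Sum.inr k)) hy
  have hBemb : MeasurableEmbedding (⇑B.repr : Euc n → EuclideanSpace ℝ (Fin d ⊕ Fin m)) :=
    B.measurableEquiv.measurableEmbedding
  calc ∫⁻ x in cubeR n R, ENNReal.ofReal (f (e (Submodule.orthogonalProjectionOnto W x)))
      ≤ ∫⁻ x in S1, ENNReal.ofReal (f (e (Submodule.orthogonalProjectionOnto W x))) :=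
        lintegral_mono_set hsub
    _ = ∫⁻ x in ⇑B.repr ⁻¹' S2, G2 (B.repr x) := by
        rw [← hS1pre]
        exact lintegral_congr fun x => harg x
    _ = ∫⁻ y in S2, G2 y :=
        B.measurePreserving_repr.setLIntegral_comp_preimage_emb hBemb _ _
    _ ≤ ∫⁻ y in T, G2 y := lintegral_mono_set hS2T
    _ ≤ ENNReal.ofReal (2 * Rc) ^ m * ∫⁻ y, ENNReal.ofReal (f y) := ?_
  -- step 3: transfer to the pi space
  have hφ := EuclideanSpace.volume_preserving_symm_measurableEquiv_toLp (Fin d ⊕ Fin m)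
  set T2 : Set ((Fin d ⊕ Fin m) → ℝ) := {z | ∀ k : Fin m, |z (Sum.inr k)| ≤ Rc} with hT2
  have step3 : ∫⁻ y in T, G2 y = ∫⁻ z in T2, G3 z := by
    have : T = ⇑(MeasurableEquiv.toLp 2 ((Fin d ⊕ Fin m) → ℝ)).symm ⁻¹' T2 := rfl
    rw [this]
    exact hφ.setLIntegral_comp_preimage_emb
      (MeasurableEquiv.toLp 2 ((Fin d ⊕ Fin m) → ℝ)).symm.measurableEmbedding G3 T2
  rw [step3]
  -- step 4: split into product
  set ψ : ((Fin d → ℝ) × (Fin m → ℝ)) ≃ᵐ ((Fin d ⊕ Fin m) → ℝ) :=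
    (MeasurableEquiv.sumPiEquivProdPi (fun _ : Fin d ⊕ Fin m => ℝ)).symm with hψ
  have hψmp : MeasurePreserving ψ volume volume :=
    volume_measurePreserving_sumPiEquivProdPi_symm (fun _ : Fin d ⊕ Fin m => ℝ)
  set T3 : Set (Fin m → ℝ) := {z | ∀ k, |z k| ≤ Rc} with hT3
  have hpre : ⇑ψ ⁻¹' T2 = (Set.univ : Set (Fin d → ℝ)) ×ˢ T3 := by
    ext w
    exact ⟨fun h => ⟨trivial, h⟩, fun h => h.2⟩
  have step4 : ∫⁻ z in T2, G3 z = ∫⁻ w in (Set.univ : Set (Fin d → ℝ)) ×ˢ T3, G3 (ψ w) := by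
    rw [← hpre]
    exact (hψmp.setLIntegral_comp_preimage_emb ψ.measurableEmbedding _ _).symm
  rw [step4]
  have hvolT3 : volume T3 = ENNReal.ofReal (2 * Rc) ^ m := by
    have : T3 = Set.univ.pi (fun _ : Fin m => Set.Icc (-Rc) Rc) := by
      ext z
      exact ⟨fun h k _ => abs_le.mp (h k), fun h k => abs_le.mpr (h k trivial)⟩
    rw [this, volume_pi_pi]
    simp only [Real.volume_Icc, sub_neg_eq_add]
    rw [Finset.prod_const, Finset.card_univ, Fintype.card_fin]
    congr 1
    ring_nf
  have hsplit2 : (fun w : (Fin d → ℝ) × (Fin m → ℝ) => G3 (ψ w))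
      = fun w => (fun a => ENNReal.ofReal (f (toEuc a))) w.1 * (fun _ => (1:ℝ≥0∞)) w.2 := by
    funext w
    rw [mul_one]
    rfl
  have hrestr : (volume : Measure ((Fin d → ℝ) × (Fin m → ℝ))).restrict (Set.univ ×ˢ T3)
      = (volume : Measure (Fin d → ℝ)).prod ((volume : Measure (Fin m → ℝ)).restrict T3) := by
    rw [Measure.volume_eq_prod, ← Measure.prod_restrict, Measure.restrict_univ]
  have hfid : Measurable (fun a : Fin d → ℝ => ENNReal.ofReal (f (toEuc a))) :=
    ENNReal.measurable_ofReal.comp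
      (hf.comp (PiLp.volume_preserving_toLp (Fin d)).measurable)
  refine le_of_eq ?_
  calc ∫⁻ w in Set.univ ×ˢ T3, G3 (ψ w)
      = ∫⁻ w, ((fun a => ENNReal.ofReal (f (toEuc a))) w.1 * (fun _ => (1:ℝ≥0∞)) w.2)
          ∂((volume : Measure (Fin d → ℝ)).prod ((volume : Measure (Fin m → ℝ)).restrict T3)) := by
        rw [← hrestr]
        exact lintegral_congr fun w => by rw [mul_one]; rfl
    _ = (∫⁻ a, ENNReal.ofReal (f (toEuc a))) *
          ∫⁻ _b, (1:ℝ≥0∞) ∂((volume : Measure (Fin m → ℝ)).restrict T3) :=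
        lintegral_prod_mul hfid.aemeasurable aemeasurable_const
    _ = (∫⁻ y : Euc d, ENNReal.ofReal (f y)) * volume T3 := by
        rw [lintegral_one, Measure.restrict_apply_univ]
        congr 1
        exact ((PiLp.volume_preserving_ofLp (Fin d)).lintegral_comp
          hfid).symm
    _ = ENNReal.ofReal (2 * Rc) ^ m * ∫⁻ y : Euc d, ENNReal.ofReal (f y) := by
        rw [hvolT3, mul_comm]



lemma volume_cubeR {n : ℕ} {R : ℝ} (hR : 0 ≤ R) :
    volume (cubeR n R) = (ENNReal.ofReal (2 * R)) ^ n := by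
  have h1 : cubeR n R = (WithLp.ofLp : Euc n → (Fin n → ℝ)) ⁻¹'
      (Set.univ.pi (fun _ : Fin n => Set.Icc (-R) R)) := by
    ext x
    exact ⟨fun h i _ => abs_le.mp (h i), fun h i => abs_le.mpr (h i trivial)⟩
  rw [h1, (PiLp.volume_preserving_ofLp (Fin n)).measure_preimage
    (MeasurableSet.univ_pi (fun _ => measurableSet_Icc)).nullMeasurableSet, volume_pi_pi]
  simp only [Real.volume_Icc, sub_neg_eq_add]
  rw [Finset.prod_const, Finset.card_univ, Fintype.card_fin]
  congr 1
  ring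

theorem main_bound
    (n J : ℕ) (n' : Fin J → ℕ) (p : Fin J → ℝ) (hp : ∀ j, p j ∈ Set.Icc (0:ℝ) 1)
    (V : Fin J → Submodule ℝ (Euc n)) (hVdim : ∀ j, finrank ℝ ↥(V j) = n' j)
    (e : ∀ j, ↥((V j)ᗮ) ≃ₗᵢ[ℝ] Euc (n - n' j))
    (R : ℝ) (hR : 1 ≤ R)
    (f : ∀ j, Euc (n - n' j) → ℝ)
    (hlat : ∀ j, LatticeConst (f j)) (hint : ∀ j, Integrable (f j))
    (hnn : ∀ j x, 0 ≤ f j x) (hne : ∀ j, f j ≠ 0) :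
    (∫ x in cubeR n R, ∏ j, f j (((e j).toLinearEquiv.toLinearMap ∘ₗ
        (Submodule.orthogonalProjectionOnto ((V j)ᗮ)).toLinearMap) x) ^ p j) /
      ∏ j, (∫ x, f j x) ^ p j ≤
    (2*((n:ℝ)+1))^(n:ℕ) * R ^ (∑ r ∈ Finset.Icc 1 n,
      max (1 - ∑ j ∈ Finset.univ.filter (fun j => r ≤ n - n' j), p j) 0) := by
  classical
  have hR0 : (0:ℝ) < R := lt_of_lt_of_le one_pos hR
  set nd : Fin J → ℕ := fun j => n - n' j with hnd
  set π : ∀ j, Euc n → Euc (nd j) :=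
    fun j x => (e j) ((Submodule.orthogonalProjectionOnto ((V j)ᗮ)) x) with hπ
  have happ : ∀ j x, (((e j).toLinearEquiv.toLinearMap ∘ₗ
      (Submodule.orthogonalProjectionOnto ((V j)ᗮ)).toLinearMap) x) = π j x := fun j x => rfl
  have hn'le : ∀ j, n' j ≤ n := by
    intro j
    have h := Submodule.finrank_le (V j)
    rw [finrank_euclideanSpace_fin] at h
    rw [← hVdim j]
    exact h
  set E : ℝ := ∑ r ∈ Finset.Icc 1 n,
      max (1 - ∑ j ∈ Finset.univ.filter (fun j => r ≤ n - n' j), p j) 0 with hE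
  -- positive integrals
  have hIpos : ∀ j, 0 < ∫ x, f j x :=
    fun j => latConst_integral_pos (hlat j) (hint j) (hnn j) (hne j)
  set I : Fin J → ℝ≥0∞ := fun j => ENNReal.ofReal (∫ x, f j x) with hI
  have hI0 : ∀ j, I j ≠ 0 := fun j => by
    simp [hI, ENNReal.ofReal_eq_zero, not_le, hIpos j]
  have hItop : ∀ j, I j ≠ ⊤ := fun j => ENNReal.ofReal_ne_top
  have hIl : ∀ j, I j = ∫⁻ y, ENNReal.ofReal (f j y) :=
    fun j => ofReal_integral_eq_lintegral_ofReal (hint j)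
      (Filter.Eventually.of_forall (hnn j))
  -- measurability
  have hπmeas : ∀ j, Measurable (π j) := by
    intro j
    have : Continuous (((e j).toLinearEquiv.toLinearMap ∘ₗ
        (Submodule.orthogonalProjectionOnto ((V j)ᗮ)).toLinearMap : Euc n →ₗ[ℝ] Euc (nd j))) :=
      LinearMap.continuous_of_finiteDimensional _
    exact this.measurable
  have hfmeas : ∀ j, Measurable (f j) := fun j => latConst_measurable (hlat j)
  set G : Fin J → Euc n → ℝ≥0∞ := fun j x => ENNReal.ofReal (f j (π j x)) with hG
  have hGmeas : ∀ j, Measurable (G j) := fun j =>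
    ENNReal.measurable_ofReal.comp ((hfmeas j).comp (hπmeas j))
  have hGle : ∀ j x, G j x ≤ I j := fun j x =>
    ENNReal.ofReal_le_ofReal (latConst_le_integral (hlat j) (hint j) (hnn j) _)
  -- choose t
  obtain ⟨t, ht0, htp, hts, htE⟩ := exists_good_t nd (fun j => Nat.sub_le n (n' j)) p
    (fun j => (hp j).1)
  -- numerator as lintegral
  set NL : ℝ≥0∞ := ∫⁻ x in cubeR n R, ∏ j, (G j x) ^ (p j) with hNL
  have hNum : (∫ x in cubeR n R, ∏ j, f j (π j x) ^ p j) = NL.toReal := by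
    rw [hNL]
    rw [integral_eq_lintegral_of_nonneg_ae
      (Filter.Eventually.of_forall (fun x => Finset.prod_nonneg
        (fun j _ => Real.rpow_nonneg (hnn j _) _)))
      ((Finset.measurable_prod Finset.univ (fun j _ =>
        (Real.continuous_rpow_const (hp j).1).measurable.comp
          ((hfmeas j).comp (hπmeas j)))).aestronglyMeasurable)]
    congr 1
    refine lintegral_congr fun x => ?_
    rw [ENNReal.ofReal_prod_of_nonneg (fun j _ => Real.rpow_nonneg (hnn j _) _)]
    exact Finset.prod_congr rfl fun j _ =>
      (ENNReal.ofReal_rpow_of_nonneg (hnn j _) (hp j).1).symm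
  -- pointwise splitting
  set C1 : ℝ≥0∞ := ∏ j, (I j) ^ (p j - t j) with hC1
  have hC1top : C1 ≠ ⊤ := ENNReal.prod_ne_top fun j _ =>
    ENNReal.rpow_ne_top_of_nonneg (sub_nonneg.mpr (htp j)) (hItop j)
  have hptw : ∀ x, ∏ j, (G j x) ^ (p j) ≤ C1 * ∏ j, (G j x) ^ (t j) := by
    intro x
    calc ∏ j, (G j x) ^ (p j)
        = ∏ j, ((G j x) ^ (t j) * (G j x) ^ (p j - t j)) := by
          refine Finset.prod_congr rfl fun j _ => ?_
          rw [← ENNReal.rpow_add_of_nonneg _ _ (ht0 j) (sub_nonneg.mpr (htp j))]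
          congr 1
          ring
      _ ≤ ∏ j, ((G j x) ^ (t j) * (I j) ^ (p j - t j)) := by
          refine Finset.prod_le_prod' fun j _ => ?_
          exact mul_le_mul_right (ENNReal.rpow_le_rpow (hGle j x)
            (sub_nonneg.mpr (htp j))) _
      _ = (∏ j, (G j x) ^ (t j)) * C1 := Finset.prod_mul_distrib
      _ = C1 * ∏ j, (G j x) ^ (t j) := mul_comm _ _
  -- Hölder
  set pe : Fin (J+1) → ℝ := Fin.cons (1 - ∑ j, t j) t with hpe
  set F : Fin (J+1) → Euc n → ℝ≥0∞ := Fin.cons (fun _ => 1) G with hF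
  have hpe0 : ∀ i, 0 ≤ pe i := by
    intro i
    refine Fin.cases ?_ ?_ i <;> simp only [hpe, Fin.cons_zero, Fin.cons_succ]
    · linarith
    · exact ht0
  have hpesum : ∑ i, pe i = 1 := by
    rw [Fin.sum_univ_succ]
    simp only [hpe, Fin.cons_zero, Fin.cons_succ]
    ring
  have hFmeas : ∀ i ∈ Finset.univ, AEMeasurable (F i) (volume.restrict (cubeR n R)) := by
    intro i _
    refine Fin.cases ?_ ?_ i <;> simp only [hF, Fin.cons_zero, Fin.cons_succ]
    · exact aemeasurable_const
    · exact fun j => (hGmeas j).aemeasurable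
  have hHolder := ENNReal.lintegral_prod_norm_pow_le (μ := volume.restrict (cubeR n R))
    Finset.univ hFmeas hpesum (fun i _ => hpe0 i)
  have hHolder' : ∫⁻ x in cubeR n R, ∏ j, (G j x) ^ (t j) ≤
      (volume (cubeR n R)) ^ (1 - ∑ j, t j) * ∏ j, (∫⁻ x in cubeR n R, G j x) ^ (t j) := by
    calc ∫⁻ x in cubeR n R, ∏ j, (G j x) ^ (t j)
        = ∫⁻ x in cubeR n R, ∏ i, (F i x) ^ (pe i) := by
          refine lintegral_congr fun x => ?_
          rw [Fin.prod_univ_succ]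
          simp only [hF, hpe, Fin.cons_zero, Fin.cons_succ, ENNReal.one_rpow, one_mul]
      _ ≤ ∏ i, (∫⁻ x in cubeR n R, F i x) ^ (pe i) := hHolder
      _ = (volume (cubeR n R)) ^ (1 - ∑ j, t j) * ∏ j, (∫⁻ x in cubeR n R, G j x) ^ (t j) := by
          rw [Fin.prod_univ_succ]
          simp only [hF, hpe, Fin.cons_zero, Fin.cons_succ]
          rw [setLIntegral_one]
  -- fiber bounds
  set c : ℝ≥0∞ := ENNReal.ofReal (2 * (((n:ℝ) + 1) * R)) with hc
  have hfiber : ∀ j, ∫⁻ x in cubeR n R, G j x ≤ c ^ (n' j) * I j := by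
    intro j
    have hdm : (n - n' j) + n' j = n := Nat.sub_add_cancel (hn'le j)
    have := fiber_bound hdm ((V j)ᗮ) (e j) (f j) (hfmeas j) (le_of_lt hR0)
    rw [hIl j]
    exact this
  -- volume bound
  have hvol : volume (cubeR n R) ≤ c ^ n := by
    rw [volume_cubeR (le_of_lt hR0)]
    refine pow_le_pow_left' (ENNReal.ofReal_le_ofReal ?_) n
    have : (0:ℝ) ≤ (n:ℝ) := Nat.cast_nonneg n
    nlinarith
  -- β and c facts
  set β : ℝ := 2 * (((n:ℝ) + 1) * R) with hβdef
  have hβpos : 0 < β := by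
    have : (0:ℝ) ≤ (n:ℝ) := Nat.cast_nonneg n
    rw [hβdef]; nlinarith
  have hc0 : c ≠ 0 := by
    simp only [hc, ne_eq, ENNReal.ofReal_eq_zero, not_le]
    exact hβpos
  have hctop : c ≠ ⊤ := ENNReal.ofReal_ne_top
  -- chain of bounds in ℝ≥0∞
  set En' : ℝ := (n:ℝ) * (1 - ∑ j, t j) + ∑ j, t j * ((n' j : ℕ) : ℝ) with hEn'def
  have hEn'eq : En' = (n:ℝ) - ∑ j, t j * ((nd j : ℕ) : ℝ) := by
    have hcast : ∀ j, ((nd j : ℕ) : ℝ) = (n:ℝ) - ((n' j : ℕ) : ℝ) := by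
      intro j
      rw [hnd]
      push_cast [hn'le j]
      ring
    have h1 : ∑ j, t j * ((nd j : ℕ) : ℝ) = ∑ j, (t j * (n:ℝ) - t j * ((n' j : ℕ) : ℝ)) := by
      refine Finset.sum_congr rfl fun j _ => ?_
      rw [hcast j]
      ring
    rw [hEn'def, h1, Finset.sum_sub_distrib, ← Finset.sum_mul]
    ring
  have hEn'le_n : En' ≤ (n:ℝ) := by
    rw [hEn'eq]
    have : 0 ≤ ∑ j, t j * ((nd j : ℕ) : ℝ) :=
      Finset.sum_nonneg fun j _ => mul_nonneg (ht0 j) (Nat.cast_nonneg _)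
    linarith
  have hEn'le_E : En' ≤ E := by
    rw [hEn'eq, hE]
    simpa [hnd] using htE
  have hrpow_sum : ∀ (a : Fin J → ℝ), c ^ (∑ j, a j) = ∏ j, c ^ (a j) := by
    intro a
    induction (Finset.univ : Finset (Fin J)) using Finset.cons_induction with
    | empty => simp
    | cons i s hi ih => rw [Finset.sum_cons, Finset.prod_cons, ENNReal.rpow_add _ _ hc0 hctop, ih]
  -- main ENNReal estimate
  have hmain : NL ≤ c ^ En' * ∏ j, (I j) ^ (p j) := by
    calc NL ≤ ∫⁻ x in cubeR n R, C1 * ∏ j, (G j x) ^ (t j) := lintegral_mono hptw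
      _ = C1 * ∫⁻ x in cubeR n R, ∏ j, (G j x) ^ (t j) := lintegral_const_mul' _ _ hC1top
      _ ≤ C1 * ((volume (cubeR n R)) ^ (1 - ∑ j, t j) *
            ∏ j, (∫⁻ x in cubeR n R, G j x) ^ (t j)) := mul_le_mul_right hHolder' _
      _ ≤ C1 * ((c ^ n) ^ (1 - ∑ j, t j) * ∏ j, (c ^ (n' j) * I j) ^ (t j)) := by
          refine mul_le_mul_right (mul_le_mul' (ENNReal.rpow_le_rpow hvol (by linarith)) ?_) _
          exact Finset.prod_le_prod' fun j _ =>
            ENNReal.rpow_le_rpow (hfiber j) (ht0 j)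
      _ = C1 * (c ^ ((n:ℝ) * (1 - ∑ j, t j)) *
            ((∏ j, c ^ (((n' j : ℕ) : ℝ) * t j)) * ∏ j, (I j) ^ (t j))) := by
          congr 1
          rw [← ENNReal.rpow_natCast c n, ← ENNReal.rpow_mul]
          congr 1
          rw [← Finset.prod_mul_distrib]
          refine Finset.prod_congr rfl fun j _ => ?_
          rw [ENNReal.mul_rpow_of_nonneg _ _ (ht0 j), ← ENNReal.rpow_natCast c (n' j),
            ← ENNReal.rpow_mul]
      _ = c ^ En' * (C1 * ∏ j, (I j) ^ (t j)) := by
          rw [hEn'def, ENNReal.rpow_add_of_nonneg _ _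
            (mul_nonneg (Nat.cast_nonneg n) (by linarith))
            (Finset.sum_nonneg fun j _ => mul_nonneg (ht0 j) (Nat.cast_nonneg _))]
          rw [show (∑ j, t j * ((n' j : ℕ) : ℝ)) = ∑ j, ((n' j : ℕ) : ℝ) * t j from
            Finset.sum_congr rfl fun j _ => mul_comm _ _, hrpow_sum]
          ring
      _ = c ^ En' * ∏ j, (I j) ^ (p j) := by
          congr 1
          rw [hC1, ← Finset.prod_mul_distrib]
          refine Finset.prod_congr rfl fun j _ => ?_
          rw [← ENNReal.rpow_add_of_nonneg _ _ (sub_nonneg.mpr (htp j)) (ht0 j)]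
          congr 1
          ring
  -- convert to real bound
  set D : ℝ := ∏ j, (∫ x, f j x) ^ (p j) with hD
  have hDpos : 0 < D :=
    Finset.prod_pos fun j _ => Real.rpow_pos_of_pos (hIpos j) _
  have hProdI : ∏ j, (I j) ^ (p j) = ENNReal.ofReal D := by
    rw [hD, ENNReal.ofReal_prod_of_nonneg
      (fun j _ => Real.rpow_nonneg (le_of_lt (hIpos j)) _)]
    refine Finset.prod_congr rfl fun j _ => ?_
    rw [hI]
    exact ENNReal.ofReal_rpow_of_pos (hIpos j)
  set C0 : ℝ := (2*((n:ℝ)+1))^(n:ℕ) with hC0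
  have hcpow : c ^ En' ≤ ENNReal.ofReal (C0 * R ^ E) := by
    rw [hc, ENNReal.ofReal_rpow_of_pos hβpos]
    refine ENNReal.ofReal_le_ofReal ?_
    have hb2 : β = (2*((n:ℝ)+1)) * R := by rw [hβdef]; ring
    have h21 : (1:ℝ) ≤ 2*((n:ℝ)+1) := by
      have : (0:ℝ) ≤ (n:ℝ) := Nat.cast_nonneg n
      linarith
    calc β ^ En' = (2*((n:ℝ)+1)) ^ En' * R ^ En' := by
          rw [hb2, Real.mul_rpow (by linarith) (le_of_lt hR0)]
      _ ≤ (2*((n:ℝ)+1)) ^ ((n:ℕ):ℝ) * R ^ E := by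
          refine mul_le_mul (Real.rpow_le_rpow_of_exponent_le h21 hEn'le_n)
            (Real.rpow_le_rpow_of_exponent_le hR hEn'le_E)
            (Real.rpow_nonneg (le_of_lt hR0) _) (Real.rpow_nonneg (by linarith) _)
      _ = C0 * R ^ E := by rw [Real.rpow_natCast, hC0]
  have hfinal : NL ≤ ENNReal.ofReal ((C0 * R ^ E) * D) := by
    calc NL ≤ c ^ En' * ∏ j, (I j) ^ (p j) := hmain
      _ ≤ ENNReal.ofReal (C0 * R ^ E) * ENNReal.ofReal D := by
          rw [hProdI]
          exact mul_le_mul_left hcpow _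
      _ = ENNReal.ofReal ((C0 * R ^ E) * D) :=
          (ENNReal.ofReal_mul (by positivity)).symm
  have hNum2 : (∫ x in cubeR n R, ∏ j, f j (π j x) ^ p j) ≤ (C0 * R ^ E) * D := by
    rw [hNum]
    calc NL.toReal ≤ (ENNReal.ofReal ((C0 * R ^ E) * D)).toReal :=
          ENNReal.toReal_mono ENNReal.ofReal_ne_top hfinal
      _ = (C0 * R ^ E) * D := ENNReal.toReal_ofReal (by positivity)
  rw [div_le_iff₀ hDpos]
  calc (∫ x in cubeR n R, ∏ j, f j (((e j).toLinearEquiv.toLinearMap ∘ₗ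
        (Submodule.orthogonalProjectionOnto ((V j)ᗮ)).toLinearMap) x) ^ p j)
      = ∫ x in cubeR n R, ∏ j, f j (π j x) ^ p j := rfl
    _ ≤ (C0 * R ^ E) * D := hNum2
    _ = C0 * R ^ E * ∏ j, (∫ x, f j x) ^ p j := by rw [hD]

end BLaux

theorem regularized_BL_locally_bounded
    (n J : ℕ) (n' : Fin J → ℕ) (p : Fin J → ℝ) (hp : ∀ j, p j ∈ Set.Icc (0:ℝ) 1)
    (V0 : Fin J → Submodule ℝ (Euc n)) (hV0 : ∀ j, finrank ℝ ↥(V0 j) = n' j) :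
    ∃ ν C0 : ℝ, 0 < ν ∧ 0 < C0 ∧
      ∀ V : Fin J → Submodule ℝ (Euc n),
        (∀ j, finrank ℝ ↥(V j) = n' j) → (∀ j, projDist (V j) (V0 j) ≤ ν) →
      ∀ e : ∀ j, ↥((V j)ᗮ) ≃ₗᵢ[ℝ] Euc (n - n' j),
      ∀ R : ℝ, 1 ≤ R →
        BLconst (nd := fun j => n - n' j)
            (fun j => ((e j).toLinearEquiv.toLinearMap) ∘ₗ
              (Submodule.orthogonalProjectionOnto ((V j)ᗮ)).toLinearMap) p R ≤
          C0 * R ^ (∑ r ∈ Finset.Icc 1 n,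
            max (1 - ∑ j ∈ Finset.univ.filter (fun j => r ≤ n - n' j), p j) 0) := by
  refine ⟨1, (2*((n:ℝ)+1))^(n:ℕ), one_pos, by positivity, ?_⟩
  intro V hVdim _ e R hR
  have hR0 : (0:ℝ) < R := lt_of_lt_of_le one_pos hR
  refine Real.sSup_le ?_ (by positivity)
  rintro r ⟨f, hlat, hint, hnn, hne, rfl⟩
  exact BLaux.main_bound n J n' p hp V hVdim e R hR f hlat hint hnn hne
end
end

section
/- Let a_1,…,a_J be nonzero real numbers and let p ∈ [0,1]^J satisfy Σ_{j=1}^J p_j ≥ 1. Then there exists a constant C > 0, depending only on a_1,…,a_J and p, such that for all nonnegative measurable functions f_j : ℝ → [0,∞), ∫_ℝ Π_{j=1}^J f_j(a_j x)^{p_j} dx ≤ C · Π_{j=1}^J (Σ_{m ∈ ℤ} ess sup_{[m,m+1)} f_j)^{p_j}. -/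
open MeasureTheory
noncomputable section

namespace BLauxOneDim

open Set ENNReal

/-- Essential supremum of `F` over `[m, m+1)`. -/
def T (F : ℝ → ℝ≥0∞) (m : ℤ) : ℝ≥0∞ :=
  essSup F (volume.restrict (Set.Ico (m : ℝ) (m + 1)))

/-- Step-function majorant of `F`. -/
def h (F : ℝ → ℝ≥0∞) (x : ℝ) : ℝ≥0∞ := T F ⌊x⌋

lemma mem_Ico_iff_floor {m : ℤ} {x : ℝ} :
    x ∈ Set.Ico (m : ℝ) (m + 1) ↔ ⌊x⌋ = m := by
  rw [Set.mem_Ico, Int.floor_eq_iff]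

lemma measurable_h (F : ℝ → ℝ≥0∞) : Measurable (h F) :=
  (measurable_from_top (f := T F)).comp Int.measurable_floor

lemma pairwise_disjoint_Ico :
    Pairwise (Function.onFun Disjoint fun m : ℤ => Set.Ico (m : ℝ) (m + 1)) := by
  intro i j hij
  rw [Function.onFun, Set.disjoint_left]
  intro x hxi hxj
  rw [mem_Ico_iff_floor] at hxi hxj
  exact hij (hxi.symm.trans hxj)

lemma ae_le_h (F : ℝ → ℝ≥0∞) : ∀ᵐ x, F x ≤ h F x := by
  rw [ae_iff]
  have hsub : {x | ¬ F x ≤ h F x} ⊆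
      ⋃ m : ℤ, ({x | ¬ F x ≤ T F m} ∩ Set.Ico (m : ℝ) (m + 1)) := by
    intro x hx
    have hx' : ¬ F x ≤ T F ⌊x⌋ := hx
    have hxm : x ∈ Set.Ico ((⌊x⌋ : ℝ)) (⌊x⌋ + 1) :=
      mem_Ico_iff_floor.mpr rfl
    exact Set.mem_iUnion_of_mem ⌊x⌋ (Set.mem_inter hx' hxm)
  refine measure_mono_null hsub (measure_iUnion_null fun m => ?_)
  have := ENNReal.ae_le_essSup (μ := volume.restrict (Set.Ico (m : ℝ) (m + 1))) F
  rw [ae_iff] at this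
  rwa [Measure.restrict_apply' measurableSet_Ico] at this

lemma lintegral_h (F : ℝ → ℝ≥0∞) : ∫⁻ x, h F x = ∑' m : ℤ, T F m := by
  have hunion : (⋃ m : ℤ, Set.Ico (m : ℝ) (m + 1)) = Set.univ :=
    iUnion_Ico_intCast (α := ℝ)
  rw [← setLIntegral_univ, ← hunion,
    lintegral_iUnion (fun m => measurableSet_Ico) pairwise_disjoint_Ico]
  congr 1
  ext m
  have hconst : ∫⁻ x in Set.Ico (m : ℝ) (m + 1), h F x
      = ∫⁻ _x in Set.Ico (m : ℝ) (m + 1), T F m := by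
    refine setLIntegral_congr_fun measurableSet_Ico ?_
    intro x hx
    simp only [h, mem_Ico_iff_floor.mp hx]
  rw [hconst, setLIntegral_const, Real.volume_Ico]
  simp

lemma h_le_tsum (F : ℝ → ℝ≥0∞) (x : ℝ) : h F x ≤ ∑' m : ℤ, T F m :=
  ENNReal.le_tsum _

lemma pow_split {z S : ℝ≥0∞} (hzS : z ≤ S) {pp qq : ℝ} (hq0 : 0 ≤ qq) (hqp : qq ≤ pp) :
    z ^ pp ≤ z ^ qq * S ^ (pp - qq) := by
  have : z ^ pp = z ^ qq * z ^ (pp - qq) := by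
    rw [← ENNReal.rpow_add_of_nonneg _ _ hq0 (sub_nonneg.mpr hqp)]
    ring_nf
  rw [this]
  exact mul_le_mul_right (ENNReal.rpow_le_rpow hzS (sub_nonneg.mpr hqp)) _

end BLauxOneDim

open BLauxOneDim Set ENNReal

theorem one_dim_regularized_BL_base_case_large_p
    (J : ℕ) (a : Fin J → ℝ) (ha : ∀ j, a j ≠ 0)
    (p : Fin J → ℝ) (hp : ∀ j, p j ∈ Set.Icc (0:ℝ) 1) (hsum : 1 ≤ ∑ j, p j) :
    ∃ C : ℝ, 0 < C ∧
      ∀ f : Fin J → ℝ → ℝ, (∀ j, Measurable (f j)) → (∀ j x, 0 ≤ f j x) →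
        ∫⁻ x : ℝ, ∏ j, (ENNReal.ofReal (f j (a j * x))) ^ p j ≤
          ENNReal.ofReal C *
            ∏ j, (∑' m : ℤ,
              essSup (fun x => ENNReal.ofReal (f j x))
                (volume.restrict (Set.Ico (m : ℝ) (m + 1)))) ^ p j := by
  classical
  have hs_pos : (0:ℝ) < ∑ j, p j := lt_of_lt_of_le one_pos hsum
  set q : Fin J → ℝ := fun j => p j / ∑ i, p i with hq_def
  have hq0 : ∀ j, 0 ≤ q j := fun j => div_nonneg (hp j).1 hs_pos.le
  have hqp : ∀ j, q j ≤ p j := fun j =>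
    div_le_self (hp j).1 hsum
  have hqsum : ∑ j, q j = 1 := by
    rw [hq_def, ← Finset.sum_div, div_self hs_pos.ne']
  refine ⟨∏ j, |(a j)⁻¹| ^ q j, Finset.prod_pos fun j _ =>
    Real.rpow_pos_of_pos (abs_pos.mpr (inv_ne_zero (ha j))) _, ?_⟩
  intro f hmeas hpos
  set F : Fin J → ℝ → ℝ≥0∞ := fun j x => ENNReal.ofReal (f j x) with hF_def
  have hFmeas : ∀ j, Measurable (F j) := fun j =>
    ENNReal.measurable_ofReal.comp (hmeas j)
  set S : Fin J → ℝ≥0∞ := fun j => ∑' m : ℤ, T (F j) m with hS_def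
  -- a.e. bound f_j(a_j x) ≤ h_j(a_j x)
  have hae : ∀ᵐ x, ∀ j, F j (a j * x) ≤ h (F j) (a j * x) := by
    rw [ae_all_iff]
    intro j
    have h0 := ae_le_h (F j)
    rw [ae_iff] at h0 ⊢
    have hset : {x | ¬ F j (a j * x) ≤ h (F j) (a j * x)}
        = (a j * ·) ⁻¹' {y | ¬ F j y ≤ h (F j) y} := rfl
    rw [hset, Real.volume_preimage_mul_left (ha j), h0, mul_zero]
  have hhmeas : ∀ j, Measurable (fun x => h (F j) (a j * x)) := fun j =>
    (measurable_h (F j)).comp (measurable_const_mul (a j))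
  -- pointwise/ae bound of the integrand
  have hstep : ∫⁻ x : ℝ, ∏ j, (F j (a j * x)) ^ p j ≤
      (∏ j, (S j) ^ (p j - q j)) * ∫⁻ x, ∏ j, (h (F j) (a j * x)) ^ q j := by
    rw [← lintegral_const_mul _ (by
      exact Finset.measurable_prod _ fun j _ => (hhmeas j).pow_const _)]
    refine lintegral_mono_ae (hae.mono fun x hx => ?_)
    calc ∏ j, (F j (a j * x)) ^ p j
        ≤ ∏ j, ((h (F j) (a j * x)) ^ q j * (S j) ^ (p j - q j)) := by
          refine Finset.prod_le_prod' fun j _ => ?_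
          calc (F j (a j * x)) ^ p j
              ≤ (h (F j) (a j * x)) ^ p j :=
                ENNReal.rpow_le_rpow (hx j) (hp j).1
            _ ≤ (h (F j) (a j * x)) ^ q j * (S j) ^ (p j - q j) :=
                pow_split (h_le_tsum (F j) _) (hq0 j) (hqp j)
      _ = (∏ j, (S j) ^ (p j - q j)) * ∏ j, (h (F j) (a j * x)) ^ q j := by
          rw [Finset.prod_mul_distrib, mul_comm]
  -- Hölder
  have hholder : ∫⁻ x, ∏ j, (h (F j) (a j * x)) ^ q j ≤
      ∏ j, (∫⁻ x, h (F j) (a j * x)) ^ q j :=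
    ENNReal.lintegral_prod_norm_pow_le _ (fun j _ => (hhmeas j).aemeasurable) hqsum
      (fun j _ => hq0 j)
  -- compute the integrals
  have hint : ∀ j, ∫⁻ x, h (F j) (a j * x) = ENNReal.ofReal |(a j)⁻¹| * S j := by
    intro j
    have : ∫⁻ x, h (F j) (a j * x)
        = ∫⁻ y, h (F j) y ∂(Measure.map (a j * ·) volume) :=
      (lintegral_map (measurable_h (F j)) (measurable_const_mul (a j))).symm
    rw [this, Real.map_volume_mul_left (ha j), lintegral_smul_measure,
      lintegral_h, smul_eq_mul]
  calc ∫⁻ x : ℝ, ∏ j, (F j (a j * x)) ^ p j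
      ≤ (∏ j, (S j) ^ (p j - q j)) * ∏ j, (∫⁻ x, h (F j) (a j * x)) ^ q j :=
        hstep.trans (mul_le_mul_right hholder _)
    _ = (∏ j, (S j) ^ (p j - q j)) *
        ∏ j, ((ENNReal.ofReal |(a j)⁻¹|) ^ q j * (S j) ^ q j) := by
        congr 1
        refine Finset.prod_congr rfl fun j _ => ?_
        rw [hint j, ENNReal.mul_rpow_of_nonneg _ _ (hq0 j)]
    _ = (∏ j, (ENNReal.ofReal |(a j)⁻¹|) ^ q j) * ∏ j, (S j) ^ p j := by
        rw [Finset.prod_mul_distrib, ← mul_assoc, mul_comm (∏ j, (S j) ^ (p j - q j)),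
          mul_assoc, ← Finset.prod_mul_distrib]
        congr 1
        refine Finset.prod_congr rfl fun j _ => ?_
        rw [← ENNReal.rpow_add_of_nonneg _ _ (sub_nonneg.mpr (hqp j)) (hq0 j)]
        ring_nf
    _ = ENNReal.ofReal (∏ j, |(a j)⁻¹| ^ q j) * ∏ j, (S j) ^ p j := by
        congr 1
        rw [ENNReal.ofReal_prod_of_nonneg fun j _ =>
          Real.rpow_nonneg (abs_nonneg _) _]
        refine (Finset.prod_congr rfl fun j _ => ?_).symm
        rw [ENNReal.ofReal_rpow_of_pos (abs_pos.mpr (inv_ne_zero (ha j)))]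
end
end
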